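/- arXiv:2602.18684 — 2 statements merged into one kernel-verified Lean document; each statement's English description precedes it below -/
import Mathlib

section
/- For every fixed s ∈ ℝ and ψ ∈ ℝ, the map κ ↦ F(s, κ, ψ), defined for κ ≠ 0, tends to the point (0, 0, s) as κ → 0 along nonzero values; that is, the near-zero-curvature singularity of the PCC forward kinematics is removable, with straight-line configuration (0, 0, s) as the limit. -/
open Filter

/-- PCC forward kinematics of a single-section continuum robot. -/
noncomputable def pccF (s κ ψ : ℝ) : EuclideanSpace ℝ (Fin 3) :=
  !₂[(1 / κ) * (1 - Real.cos (s * κ)) * Real.cos ψ,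
    (1 / κ) * (1 - Real.cos (s * κ)) * Real.sin ψ,
    (1 / κ) * Real.sin (s * κ)]

open Topology

/- Each coordinate of `pccF` is a difference quotient at `0` of a function vanishing there, so it
tends to that function's derivative at `0`. -/
theorem tendsto_one_div_mul_of_hasDerivAt_zero {𝕜 : Type*} [NontriviallyNormedField 𝕜]
    {f : 𝕜 → 𝕜} {f' : 𝕜} (hf : HasDerivAt f f' 0) (hf₀ : f 0 = 0) :
    Tendsto (fun x => (1 / x) * f x) (𝓝[≠] 0) (𝓝 f') := by
  simpa [hf₀] using hasDerivAt_iff_tendsto_slope_zero.mp hf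

theorem tendsto_one_div_mul_sin_mul (s : ℝ) :
    Tendsto (fun κ => (1 / κ) * Real.sin (s * κ)) (𝓝[≠] 0) (𝓝 s) := by
  have hderiv : HasDerivAt (fun κ => Real.sin (s * κ)) s 0 := by
    simpa using ((hasDerivAt_id (0 : ℝ)).const_mul s).sin
  exact tendsto_one_div_mul_of_hasDerivAt_zero hderiv (by simp)

theorem tendsto_one_div_mul_one_sub_cos_mul (s : ℝ) :
    Tendsto (fun κ => (1 / κ) * (1 - Real.cos (s * κ))) (𝓝[≠] 0) (𝓝 0) := by
  have hderiv : HasDerivAt (fun κ => 1 - Real.cos (s * κ)) 0 0 := by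
    simpa using (((hasDerivAt_id (0 : ℝ)).const_mul s).cos).const_sub 1
  exact tendsto_one_div_mul_of_hasDerivAt_zero hderiv (by simp)

/-- For fixed `s` and `ψ`, the map `κ ↦ F(s, κ, ψ)` tends to `(0, 0, s)` as `κ → 0`
along nonzero values: the near-zero-curvature singularity of the PCC forward
kinematics is removable, with the straight-line configuration `(0, 0, s)` as limit. -/
theorem pcc_zero_curvature_removable (s ψ : ℝ) :
    Tendsto (fun κ => pccF s κ ψ) (nhdsWithin 0 {0}ᶜ)
      (nhds (!₂[0, 0, s] : EuclideanSpace ℝ (Fin 3))) := by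
  have hbend := tendsto_one_div_mul_one_sub_cos_mul s
  have hcoords : Tendsto (fun κ => ![(1 / κ) * (1 - Real.cos (s * κ)) * Real.cos ψ,
      (1 / κ) * (1 - Real.cos (s * κ)) * Real.sin ψ, (1 / κ) * Real.sin (s * κ)])
      (𝓝[≠] 0) (𝓝 ![0, 0, s]) := by
    simpa only [zero_mul] using (hbend.mul_const (Real.cos ψ)).matrixVecCons
      ((hbend.mul_const (Real.sin ψ)).matrixVecCons
        ((tendsto_one_div_mul_sin_mul s).matrixVecCons tendsto_const_nhds))
  exact ((PiLp.continuous_toLp 2 _).tendsto _).comp hcoords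
end

section
/- Fix s ∈ ℝ. As κ → 0 along nonzero values, M₁₇(s, κ) tends to the finite limit (r_a² ρ π s² / (2l))·(cos ψ_a cos ψ cos θ − sin ψ_a (cos φ sin ψ − cos ψ sin φ sin θ)); in particular, the apparent 1/κ² factor in M₁₇ is canceled by the κ²-scaling of the associated trigonometric combination, and the leading-order small-curvature behavior of M₁₇ is independent of κ and scales with the inertial factor ρ r_a². -/
/-!
With `x = κ s / l`, for `κ, s ≠ 0` the entry `M₁₇` equals `(r_a² ρ π s² / l)` times
`A (sin x - x cos x) / x² + B (cos x - 1 + x sin x) / x²`, with `A`, `B` the angular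
coefficients of the two brackets. Both numerators vanish at `0` and have
derivative of the form `x h(x)` (with `h = sin`, resp. `cos`), so by L'Hôpital the quotients tend
to `h 0 / 2`, i.e. to `0` and `1 / 2`.
-/

open Filter Real

/-- The coupling mass-matrix entry `M₁₇(s, κ)` of the ACM dynamics. -/
noncomputable def M17 (ra ρ l φ θ ψ ψa s κ : ℝ) : ℝ :=
  (ra ^ 2 * ρ * π / κ ^ 2) *
    ((l * sin (κ * s / l) - κ * s * cos (κ * s / l)) *
        (sin φ * sin ψ + cos φ * cos ψ * sin θ) -
      sin ψa * (cos φ * sin ψ - cos ψ * sin φ * sin θ) *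
        (l * cos (κ * s / l) - l + κ * s * sin (κ * s / l)) +
      cos ψa * cos ψ * cos θ *
        (l * cos (κ * s / l) - l + κ * s * sin (κ * s / l)))

open Topology

theorem tendsto_div_sq_of_hasDerivAt_mul {f h : ℝ → ℝ} (hf : ∀ x, HasDerivAt f (x * h x) x)
    (hf0 : f 0 = 0) (hh : ContinuousAt h 0) :
    Tendsto (fun x => f x / x ^ 2) (𝓝[≠] 0) (𝓝 (h 0 / 2)) := by
  have hf_lim : Tendsto f (𝓝[≠] 0) (𝓝 0) := by
    simpa [hf0] using (hf 0).continuousAt.tendsto.mono_left nhdsWithin_le_nhds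
  have hsq_lim : Tendsto (fun x : ℝ => x ^ 2) (𝓝[≠] 0) (𝓝 0) := by
    simpa using ((continuous_pow 2).tendsto (0 : ℝ)).mono_left nhdsWithin_le_nhds
  have hquot : Tendsto (fun x => x * h x / (2 * x)) (𝓝[≠] 0) (𝓝 (h 0 / 2)) := by
    refine ((hh.tendsto.div_const 2).mono_left nhdsWithin_le_nhds).congr' ?_
    filter_upwards [self_mem_nhdsWithin] with x hx
    field_simp [show x ≠ 0 from hx]
  refine HasDerivAt.lhopital_zero_nhdsNE (.of_forall hf)
    (.of_forall fun x => by simpa using hasDerivAt_pow 2 x) ?_ hf_lim hsq_lim hquot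
  filter_upwards [self_mem_nhdsWithin] with x hx
  simpa using hx

theorem tendsto_sin_sub_mul_cos_div_sq :
    Tendsto (fun x => (sin x - x * cos x) / x ^ 2) (𝓝[≠] 0) (𝓝 0) := by
  have hf (x : ℝ) : HasDerivAt (fun x => sin x - x * cos x) (x * sin x) x :=
    ((hasDerivAt_sin x).sub (hasDerivAt_id' (x := x) |>.mul (hasDerivAt_cos x))).congr_deriv
      (by ring)
  simpa using tendsto_div_sq_of_hasDerivAt_mul hf (by simp) continuous_sin.continuousAt

theorem tendsto_cos_sub_one_add_mul_sin_div_sq :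
    Tendsto (fun x => (cos x - 1 + x * sin x) / x ^ 2) (𝓝[≠] 0) (𝓝 (1 / 2)) := by
  have hf (x : ℝ) : HasDerivAt (fun x => cos x - 1 + x * sin x) (x * cos x) x :=
    (((hasDerivAt_cos x).sub_const 1).add
      (hasDerivAt_id' (x := x) |>.mul (hasDerivAt_sin x))).congr_deriv (by ring)
  simpa using tendsto_div_sq_of_hasDerivAt_mul hf (by simp) continuous_cos.continuousAt

theorem M17_eq_of_ne_zero (ra ρ l φ θ ψ ψa s κ : ℝ) (hl : l ≠ 0) (hs : s ≠ 0) (hκ : κ ≠ 0) :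
    M17 ra ρ l φ θ ψ ψa s κ =
      ra ^ 2 * ρ * π * (s ^ 2 / l) *
        ((sin φ * sin ψ + cos φ * cos ψ * sin θ) *
            ((sin (κ * s / l) - κ * s / l * cos (κ * s / l)) / (κ * s / l) ^ 2) +
          (cos ψa * cos ψ * cos θ - sin ψa * (cos φ * sin ψ - cos ψ * sin φ * sin θ)) *
            ((cos (κ * s / l) - 1 + κ * s / l * sin (κ * s / l)) / (κ * s / l) ^ 2)) := by
  unfold M17
  field_simp
  ring

theorem M17_small_curvature_limit_general (ra ρ l φ θ ψ ψa s : ℝ)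
    (hl : 0 < l) :
    Tendsto (fun κ => M17 ra ρ l φ θ ψ ψa s κ) (nhdsWithin 0 {0}ᶜ)
      (nhds ((ra ^ 2 * ρ * π * s ^ 2 / (2 * l)) *
        (cos ψa * cos ψ * cos θ -
          sin ψa * (cos φ * sin ψ - cos ψ * sin φ * sin θ)))) := by
  rcases eq_or_ne s 0 with rfl | hs
  · simp [M17]
  have hx : Tendsto (fun κ : ℝ => κ * s / l) (𝓝[≠] 0) (𝓝[≠] 0) := by
    refine tendsto_nhdsWithin_iff.mpr ⟨?_, ?_⟩
    · simpa using ((continuous_mul_const s).div_const l).tendsto' 0 _ (by simp)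
        |>.mono_left nhdsWithin_le_nhds
    · filter_upwards [self_mem_nhdsWithin] with κ hκ
      exact div_ne_zero (mul_ne_zero hκ hs) hl.ne'
  have hlim := ((tendsto_sin_sub_mul_cos_div_sq.comp hx).const_mul
    (sin φ * sin ψ + cos φ * cos ψ * sin θ)).add
      ((tendsto_cos_sub_one_add_mul_sin_div_sq.comp hx).const_mul
        (cos ψa * cos ψ * cos θ - sin ψa * (cos φ * sin ψ - cos ψ * sin φ * sin θ)))
      |>.const_mul (ra ^ 2 * ρ * π * (s ^ 2 / l))
  convert hlim.congr' ?_ using 2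
  · ring
  · filter_upwards [self_mem_nhdsWithin] with κ hκ
    exact (M17_eq_of_ne_zero ra ρ l φ θ ψ ψa s κ hl.ne' hs hκ).symm

/-- For fixed `s`, as `κ → 0` along nonzero values, `M₁₇(s, κ)` tends to the finite
limit `(r_a² ρ π s² / (2l)) (cos ψ_a cos ψ cos θ − sin ψ_a (cos φ sin ψ − cos ψ sin φ sin θ))`:
the apparent `1/κ²` factor is canceled by the `κ²` scaling of the trigonometric
combination, and the leading-order small-curvature behavior of `M₁₇` is independent of
`κ` and scales with the inertial factor `ρ r_a²`. -/
theorem M17_small_curvature_limit (ra ρ l φ θ ψ ψa s : ℝ)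
    (hra : 0 < ra) (hρ : 0 < ρ) (hl : 0 < l) :
    Tendsto (fun κ => M17 ra ρ l φ θ ψ ψa s κ) (nhdsWithin 0 {0}ᶜ)
      (nhds ((ra ^ 2 * ρ * π * s ^ 2 / (2 * l)) *
        (cos ψa * cos ψ * cos θ -
          sin ψa * (cos φ * sin ψ - cos ψ * sin φ * sin θ)))) :=
  M17_small_curvature_limit_general ra ρ l φ θ ψ ψa s hl
end
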